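/- Let q_l > 0 be fixed. Then the function q_h ↦ q_l·q_h·(q_h − q_l)/(4·q_h − q_l)² is monotone nondecreasing on the interval [q_l, ∞). -/

import Mathlib

/-! Substituting `s = q_l / (4 q_h - q_l)` turns the utility into the quadratic
`q_l (1 - 2 s - 3 s²) / 16`, which decreases in `s ≥ 0`, while `s` itself decreases in `q_h`. -/

open Set

lemma mul_mul_sub_div_sq_eq (r x : ℝ) (hx : 4 * x - r ≠ 0) :
    r * x * (x - r) / (4 * x - r) ^ 2 =
      r * (1 - 2 * (r / (4 * x - r)) - 3 * (r / (4 * x - r)) ^ 2) / 16 := by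
  obtain ⟨u, rfl⟩ : ∃ u, x = (u + r) / 4 := ⟨4 * x - r, by ring⟩
  rw [show 4 * ((u + r) / 4) - r = u by ring] at hx ⊢
  field_simp
  ring

lemma antitoneOn_div_four_mul_sub {r : ℝ} (hr : 0 ≤ r) :
    AntitoneOn (fun x : ℝ => r / (4 * x - r)) (Ioi (r / 4)) := by
  intro x hx y hy hxy
  simp only [mem_Ioi] at hx hy
  exact div_le_div_of_nonneg_left hr (by linarith) (by linarith)

lemma mapsTo_div_four_mul_sub {r : ℝ} (hr : 0 ≤ r) :
    MapsTo (fun x : ℝ => r / (4 * x - r)) (Ioi (r / 4)) (Ici 0) := fun x hx =>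
  div_nonneg hr (by simp only [mem_Ioi] at hx; linarith)

lemma antitoneOn_one_sub_two_mul_sub_three_mul_sq {r : ℝ} (hr : 0 ≤ r) :
    AntitoneOn (fun s : ℝ => r * (1 - 2 * s - 3 * s ^ 2) / 16) (Ici 0) := by
  intro s hs t ht hst
  simp only [mem_Ici] at hs ht
  have : 1 - 2 * t - 3 * t ^ 2 ≤ 1 - 2 * s - 3 * s ^ 2 := by nlinarith
  dsimp only
  gcongr

theorem Ul_monotone_in_qh (ql : ℝ) (hql : 0 < ql) :
    MonotoneOn (fun qh : ℝ => ql * qh * (qh - ql) / (4 * qh - ql) ^ 2)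
      (Set.Ici ql) := by
  have hIci : Ici ql ⊆ Ioi (ql / 4) := fun x hx => by
    simp only [mem_Ici, mem_Ioi] at hx ⊢; linarith
  refine (((antitoneOn_one_sub_two_mul_sub_three_mul_sq hql.le).comp (antitoneOn_div_four_mul_sub hql.le)
    (mapsTo_div_four_mul_sub hql.le)).mono hIci).congr fun x hx => ?_
  have hx4 : 4 * x - ql ≠ 0 := by simp only [mem_Ici] at hx; linarith
  exact (mul_mul_sub_div_sq_eq ql x hx4).symm
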